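/- Picone-type inequality: With L(u,v) = Φ(x,∇u) + (p-1)(u/v)^p Φ(x,∇v) - (u/v)^{p-1}⟨a(x,∇v),∇u⟩ as above, where Φ(x,·) is convex, p-homogeneous and ∇_ξΦ = p·a, one has L(u,v) ≥ 0 for all u ≥ 0, v > 0 differentiable. -/

import Mathlib

/-!
Write `t = u/v`. The first-order convexity inequality for `Φ` at `∇v`, tested against `t⁻¹ ∇u`,
together with Euler's identity `DΦ(η) η = p Φ(η)` and homogeneity, gives after multiplying by
`t ^ p` the Young-type bound `p t ^ (p-1) ⟪a(∇v), ∇u⟫ ≤ Φ(∇u) + (p-1) t ^ p Φ(∇v)`.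
A convex positively `p`-homogeneous function is nonnegative, so
`p L(u,v) = (slack of that bound) + (p-1) (Φ(∇u) + (p-1) t ^ p Φ(∇v)) ≥ 0`.
-/

open Real
open scoped RealInnerProductSpace

theorem ConvexOn.add_fderiv_sub_le {E : Type*} [NormedAddCommGroup E] [NormedSpace ℝ E]
    {s : Set E} {f : E → ℝ} (hf : ConvexOn ℝ s f) {x y : E} (hx : x ∈ s) (hy : y ∈ s)
    (hd : DifferentiableAt ℝ f x) :
    f x + fderiv ℝ f x (y - x) ≤ f y := by
  let ℓ : ℝ →ᵃ[ℝ] E := AffineMap.lineMap x y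
  have hconv : ConvexOn ℝ (ℓ ⁻¹' s) (f ∘ ℓ) := hf.comp_affineMap ℓ
  have hderiv : HasDerivAt (f ∘ ℓ) (fderiv ℝ f x (y - x)) 0 := by
    refine HasFDerivAt.comp_hasDerivAt (0 : ℝ) ?_ AffineMap.hasDerivAt_lineMap
    simpa [ℓ] using hd.hasFDerivAt
  have hslope := hconv.le_slope_of_hasDerivAt (by simpa [ℓ]) (by simpa [ℓ]) one_pos hderiv
  simp only [slope_def_field, ℓ, AffineMap.lineMap_apply_zero, AffineMap.lineMap_apply_one,
    Function.comp_apply, sub_zero, div_one] at hslope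
  linarith

def PosHomogeneous {E : Type*} [SMul ℝ E] (p : ℝ) (f : E → ℝ) : Prop :=
  ∀ t : ℝ, 0 < t → ∀ ξ, f (t • ξ) = t ^ p * f ξ

namespace PosHomogeneous

section Module

variable {E : Type*} [AddCommGroup E] [Module ℝ E] {p : ℝ} {f : E → ℝ}

theorem map_zero (hf : PosHomogeneous p f) (hp : p ≠ 0) : f 0 = 0 := by
  have h := hf 2 two_pos 0
  rw [smul_zero] at h
  have h2 : (2 : ℝ) ^ p ≠ 1 := by
    rwa [← Real.rpow_zero 2, Ne, Real.rpow_right_inj two_pos (by norm_num)]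
  by_contra h0
  exact h2 (mul_right_cancel₀ h0 (by rw [one_mul, ← h]))

theorem nonneg_of_convexOn (hf : PosHomogeneous p f) (hconv : ConvexOn ℝ Set.univ f)
    (hp : 1 < p) (ξ : E) : 0 ≤ f ξ := by
  have hmid := hconv.2 (Set.mem_univ ξ) (Set.mem_univ 0) (by norm_num : (0 : ℝ) ≤ 1 / 2)
    (by norm_num : (0 : ℝ) ≤ 1 / 2) (by norm_num)
  rw [smul_zero, add_zero, hf.map_zero (by linarith), hf _ (by norm_num), smul_eq_mul,
    smul_zero, add_zero] at hmid
  have hlt : (1 / 2 : ℝ) ^ p < 1 / 2 := by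
    simpa using Real.rpow_lt_rpow_of_exponent_gt (by norm_num : (0 : ℝ) < 1 / 2) (by norm_num) hp
  nlinarith

end Module

variable {E : Type*} [NormedAddCommGroup E] [NormedSpace ℝ E] {p : ℝ} {f : E → ℝ}

theorem fderiv_apply_self (hf : PosHomogeneous p f) {ξ : E} (hd : DifferentiableAt ℝ f ξ) :
    fderiv ℝ f ξ ξ = p * f ξ := by
  have hline : HasDerivAt (fun t : ℝ => t • ξ) ξ 1 :=
    ((hasDerivAt_id (1 : ℝ)).smul_const ξ).congr_deriv (one_smul ℝ ξ)
  have hray : HasDerivAt (fun t : ℝ => f (t • ξ)) (fderiv ℝ f ξ ξ) 1 := by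
    refine HasFDerivAt.comp_hasDerivAt (1 : ℝ) ?_ hline
    simpa using hd.hasFDerivAt
  have hpow : HasDerivAt (fun t : ℝ => t ^ p * f ξ) (p * f ξ) 1 := by
    simpa using (Real.hasDerivAt_rpow_const (p := p) (Or.inl one_ne_zero)).mul_const (f ξ)
  refine hray.unique (hpow.congr_of_eventuallyEq ?_)
  filter_upwards [eventually_gt_nhds one_pos] with t ht
  exact hf t ht ξ

theorem rpow_sub_one_mul_fderiv_le (hf : PosHomogeneous p f) (hconv : ConvexOn ℝ Set.univ f)
    (hp : 1 < p) {η : E} (hd : DifferentiableAt ℝ f η) {t : ℝ} (ht : 0 ≤ t) (ξ : E) :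
    t ^ (p - 1) * fderiv ℝ f η ξ ≤ f ξ + (p - 1) * t ^ p * f η := by
  rcases ht.eq_or_lt with rfl | ht
  · rw [zero_rpow (by linarith), zero_rpow (by linarith)]
    simpa using hf.nonneg_of_convexOn hconv hp ξ
  have key := hconv.add_fderiv_sub_le (Set.mem_univ η) (Set.mem_univ (t⁻¹ • ξ)) hd
  rw [map_sub, map_smul, hf.fderiv_apply_self hd, hf _ (inv_pos.2 ht), smul_eq_mul] at key
  calc t ^ (p - 1) * fderiv ℝ f η ξ = t ^ p * (t⁻¹ * fderiv ℝ f η ξ) := by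
        rw [rpow_sub_one ht.ne']; ring
    _ ≤ t ^ p * (t⁻¹ ^ p * f ξ + (p - 1) * f η) := by gcongr; linarith
    _ = f ξ + (p - 1) * t ^ p * f η := by
        rw [inv_rpow ht.le, mul_add, ← mul_assoc, mul_inv_cancel₀ (rpow_pos_of_pos ht p).ne']
        ring

end PosHomogeneous

theorem picone_inequality_general
    {N : ℕ} (p : ℝ) (hp : 1 < p)
    (Φ : EuclideanSpace ℝ (Fin N) → ℝ)
    (a : EuclideanSpace ℝ (Fin N) → EuclideanSpace ℝ (Fin N))
    (hΦdiff : Differentiable ℝ Φ)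
    (hΦconv : ConvexOn ℝ Set.univ Φ)
    (hΦhom : ∀ t : ℝ, 0 < t → ∀ ξ, Φ (t • ξ) = t ^ p * Φ ξ)
    (ha : ∀ ξ, gradient Φ ξ = p • a ξ)
    (u v : EuclideanSpace ℝ (Fin N) → ℝ)
    (hu : ∀ x, 0 ≤ u x) (hv : ∀ x, 0 < v x)
    (x₀ : EuclideanSpace ℝ (Fin N)) :
    0 ≤ Φ (gradient u x₀) + (p - 1) * (u x₀ / v x₀) ^ p * Φ (gradient v x₀)
        - (u x₀ / v x₀) ^ (p - 1) * ⟪a (gradient v x₀), gradient u x₀⟫ := by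
  have hΦ : PosHomogeneous p Φ := hΦhom
  have ht : 0 ≤ u x₀ / v x₀ := div_nonneg (hu x₀) (hv x₀).le
  have hyoung := hΦ.rpow_sub_one_mul_fderiv_le hΦconv hp (hΦdiff (gradient v x₀)) ht
    (gradient u x₀)
  rw [← inner_gradient_left, ha, real_inner_smul_left] at hyoung
  have hΦu := hΦ.nonneg_of_convexOn hΦconv hp (gradient u x₀)
  have hΦv := hΦ.nonneg_of_convexOn hΦconv hp (gradient v x₀)
  refine (mul_nonneg_iff_of_pos_left (by linarith : 0 < p)).1 ?_
  linarith [mul_nonneg (sub_nonneg.2 hp.le)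
    (add_nonneg hΦu (mul_nonneg (mul_nonneg (sub_nonneg.2 hp.le) (rpow_nonneg ht p)) hΦv))]

/-- Picone-type inequality: `L(u,v) ≥ 0` for `u ≥ 0`, `v > 0` differentiable,
where `Φ` is convex, `p`-homogeneous and `∇_ξΦ = p a`. -/
theorem picone_inequality
    {N : ℕ} (p : ℝ) (hp : 1 < p)
    (Φ : EuclideanSpace ℝ (Fin N) → ℝ)
    (a : EuclideanSpace ℝ (Fin N) → EuclideanSpace ℝ (Fin N))
    (hΦdiff : Differentiable ℝ Φ)
    (hΦconv : ConvexOn ℝ Set.univ Φ)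
    (hΦhom : ∀ t : ℝ, 0 < t → ∀ ξ, Φ (t • ξ) = t ^ p * Φ ξ)
    (ha : ∀ ξ, gradient Φ ξ = p • a ξ)
    (u v : EuclideanSpace ℝ (Fin N) → ℝ)
    (hu : ∀ x, 0 ≤ u x) (hv : ∀ x, 0 < v x)
    (x₀ : EuclideanSpace ℝ (Fin N))
    (hud : DifferentiableAt ℝ u x₀) (hvd : DifferentiableAt ℝ v x₀) :
    0 ≤ Φ (gradient u x₀) + (p - 1) * (u x₀ / v x₀) ^ p * Φ (gradient v x₀)
        - (u x₀ / v x₀) ^ (p - 1) * ⟪a (gradient v x₀), gradient u x₀⟫ :=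
  picone_inequality_general p hp Φ a hΦdiff hΦconv hΦhom ha u v hu hv x₀
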